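/- arXiv:2502.07233 — 3 statements merged into one kernel-verified Lean document; each statement's English description precedes it below -/
import Mathlib

section
/- Let R be a commutative ℚ-algebra and f ∈ R. Let N ⊆ M = R[t]_{f−t}/R[t] be an R-submodule that is stable under multiplication by t (i.e. t·N ⊆ N). If for some integer p ≥ 0 there exist h_1, …, h_p ∈ R such that ∂_t^p δ + ∑_{i=1}^p h_i ∂_t^{p−i} δ ∈ N, then ∂_t^j δ ∈ N for all 0 ≤ j ≤ p; equivalently, the R-submodule ∑_{j=0}^p R·∂_t^j δ of M is contained in N. (This is the content of the implication ii) ⇒ iv) in the paper's characterization of the minimal exponent via the V-filtration, Theorem 2.2, stated in the concrete model of B_f: one shows that −(1/p)(t − f) applied to the hypothesized element is again of the same form with p replaced by p − 1, and concludes by induction.) -/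
/-!
Let `R` be a commutative `ℚ`-algebra, `f ∈ R`, and `M = R[t]_{f−t}/R[t]` (the
concrete model of `B_f`), with `δ_j` the class of `(f − t)^{−j}` and `δ = δ_1`.
Let `D` be the (unique) `R`-linear derivation of `R[t]_{f−t}` extending `d/dt`
on `R[t]` (encoded by `hD`); it preserves the image of `R[t]`, hence induces an
`R`-linear endomorphism `∂` of `M` (encoded by `h∂`).

STATEMENT: if `N ⊆ M` is an `R`-submodule stable under multiplication by `t`,
and for some `p ≥ 0` there are `h_1, …, h_p ∈ R` with
`∂^p δ + ∑_{i=1}^p h_i ∂^{p−i} δ ∈ N`, then `∂^j δ ∈ N` for all `0 ≤ j ≤ p`.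
-/

open Polynomial

/-- The localization `R[t]_{f−t}` of `R[t]` at the multiplicative set of powers of `f − t`. -/
noncomputable abbrev BLoc (R : Type*) [CommRing R] (f : R) : Type _ :=
  Localization.Away (C f - X : R[X])

/-- The image of `R[t]` in `R[t]_{f−t}`, as an `R[t]`-submodule. -/
noncomputable abbrev Bsub (R : Type*) [CommRing R] (f : R) : Submodule R[X] (BLoc R f) :=
  LinearMap.range (Algebra.linearMap R[X] (BLoc R f))

/-- The module `M = R[t]_{f−t}/R[t]`, the concrete model of `B_f`. -/
noncomputable abbrev BQuot (R : Type*) [CommRing R] (f : R) : Type _ :=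
  BLoc R f ⧸ Bsub R f

/-- `δ_j`: the class of `(f − t)^{−j}` in `M = R[t]_{f−t}/R[t]`. -/
noncomputable def Bdelta (R : Type*) [CommRing R] (f : R) (j : ℕ) : BQuot R f :=
  Submodule.Quotient.mk (Localization.mk 1 ⟨(C f - X) ^ j, j, rfl⟩)

namespace BfAux
variable {R : Type*} [CommRing R] (f : R)

noncomputable def pw (j : ℕ) : Submonoid.powers (C f - X : R[X]) := ⟨(C f - X) ^ j, j, rfl⟩

noncomputable def mm (j : ℕ) : BLoc R f := Localization.mk 1 (pw f j)

lemma Bdelta_eq (j : ℕ) : Bdelta R f j = Submodule.Quotient.mk (mm f j) := rfl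

lemma pw_mul (i j : ℕ) : pw f i * pw f j = pw f (i + j) := by
  apply Subtype.ext; simp [pw, pow_add]

lemma mm_mul (i j : ℕ) : mm f i * mm f j = mm f (i + j) := by
  rw [mm, mm, Localization.mk_mul, one_mul, pw_mul, mm]

lemma mm_zero : mm f 0 = 1 := by
  have : pw f 0 = 1 := by apply Subtype.ext; simp [pw]
  rw [mm, this, Localization.mk_one]

lemma alg_mul_mm (j : ℕ) :
    algebraMap R[X] (BLoc R f) (C f - X) * mm f (j + 1) = mm f j := by
  rw [← Localization.mk_one_eq_algebraMap, mm, mm, Localization.mk_mul, one_mul]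
  rw [Localization.mk_eq_mk_iff, Localization.r_iff_exists]
  exact ⟨1, by simp [pw, pow_succ, mul_comm]⟩

variable (D : Derivation R (BLoc R f) (BLoc R f))
  (hD : ∀ p : R[X], D (algebraMap R[X] (BLoc R f) p)
      = algebraMap R[X] (BLoc R f) (derivative p))

include hD in
lemma D_u : D (algebraMap R[X] (BLoc R f) (C f - X)) = -1 := by
  rw [hD]; simp

include hD in
lemma D_mm (j : ℕ) : D (mm f j) = j • mm f (j + 1) := by
  induction j with
  | zero => rw [mm_zero, Derivation.map_one_eq_zero, zero_smul]
  | succ j ih =>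
    have h1 := congrArg D (alg_mul_mm f j)
    rw [Derivation.leibniz, D_u f D hD, ih, smul_eq_mul, smul_eq_mul, mul_neg_one] at h1
    -- h1 : algebraMap (C f - X) * D (mm f (j+1)) + (- mm f (j+1)) = j • mm f (j+1)
    have h2 : algebraMap R[X] (BLoc R f) (C f - X) * D (mm f (j + 1))
        = (j + 1 : ℕ) • mm f (j + 1) := by
      rw [succ_nsmul]; linear_combination h1
    have h3 := congrArg (mm f 1 * ·) h2
    rw [← mul_assoc, mul_comm (mm f 1), alg_mul_mm f 0, mm_zero, one_mul,
      mul_smul_comm, mm_mul] at h3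
    rw [h3, add_comm 1 (j+1)]

lemma Bdelta_zero : Bdelta R f 0 = 0 := by
  rw [Bdelta_eq, mm_zero]
  exact (Submodule.Quotient.mk_eq_zero _).2 ⟨1, by simp⟩

variable (dt : BQuot R f →ₗ[R] BQuot R f)
  (hdt : ∀ x : BLoc R f, dt (Submodule.Quotient.mk x) = Submodule.Quotient.mk (D x))

include hD hdt in
lemma dt_Bdelta (j : ℕ) : dt (Bdelta R f j) = j • Bdelta R f (j + 1) := by
  rw [Bdelta_eq, hdt, D_mm f D hD, Bdelta_eq, Submodule.Quotient.mk_smul]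

include hD hdt in
lemma pow_dt_Bdelta (k : ℕ) :
    (dt ^ k) (Bdelta R f 1) = k.factorial • Bdelta R f (k + 1) := by
  induction k with
  | zero => simp
  | succ k ih =>
    rw [pow_succ', Module.End.mul_apply, ih, map_nsmul, dt_Bdelta f D hD dt hdt,
      ← mul_nsmul, Nat.factorial_succ, mul_comm]

lemma X_smul_Bdelta (j : ℕ) :
    f • Bdelta R f (j + 1) - (X : R[X]) • Bdelta R f (j + 1) = Bdelta R f j := by
  have key : f • mm f (j + 1) - (X : R[X]) • mm f (j + 1) = mm f j := by
    rw [Algebra.smul_def (X : R[X]), ← algebraMap_smul R[X] f (mm f (j + 1)),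
      Algebra.smul_def, ← mul_comm (mm f (j+1)), ← mul_comm (mm f (j+1)), ← mul_sub,
      ← map_sub]
    rw [show (algebraMap R R[X]) f - X = C f - X from rfl]
    rw [mul_comm, alg_mul_mm]
  rw [Bdelta_eq, Bdelta_eq, ← key, Submodule.Quotient.mk_sub, Submodule.Quotient.mk_smul,
    Submodule.Quotient.mk_smul]

end BfAux

set_option maxHeartbeats 1000000 in
theorem mem_of_principal_part_mem
    {R : Type*} [CommRing R] [Algebra ℚ R] (f : R)
    (D : Derivation R (BLoc R f) (BLoc R f))
    (hD : ∀ p : R[X], D (algebraMap R[X] (BLoc R f) p)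
        = algebraMap R[X] (BLoc R f) (derivative p))
    (dt : BQuot R f →ₗ[R] BQuot R f)
    (hdt : ∀ x : BLoc R f,
      dt (Submodule.Quotient.mk x) = Submodule.Quotient.mk (D x))
    (N : Submodule R (BQuot R f))
    (hN : ∀ x ∈ N, (X : R[X]) • x ∈ N)
    (p : ℕ) (h : ℕ → R)
    (hmem : (dt ^ p) (Bdelta R f 1)
        + ∑ i ∈ Finset.Icc 1 p, h i • (dt ^ (p - i)) (Bdelta R f 1) ∈ N) :
    ∀ j ≤ p, (dt ^ j) (Bdelta R f 1) ∈ N := by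
  classical
  set c : R := (p.factorial : R) with hc
  -- Q q : principal part at level q lies in N
  set Q : ℕ → Prop := fun q => ∃ g : ℕ → R,
      c • Bdelta R f (q + 1) + ∑ i ∈ Finset.Icc 1 q, g i • Bdelta R f (q + 1 - i) ∈ N
    with hQ
  -- termwise action of f• - X•
  have term : ∀ (a : R) (j : ℕ),
      f • (a • Bdelta R f (j + 1)) - (X : R[X]) • (a • Bdelta R f (j + 1))
        = a • Bdelta R f j := by
    intro a j
    rw [smul_comm, smul_comm (X : R[X]), ← smul_sub, BfAux.X_smul_Bdelta]
  -- Q p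
  have hQp : Q p := by
    refine ⟨fun i => h i * ((p - i).factorial : R), ?_⟩
    have e : (dt ^ p) (Bdelta R f 1)
        + ∑ i ∈ Finset.Icc 1 p, h i • (dt ^ (p - i)) (Bdelta R f 1)
        = c • Bdelta R f (p + 1)
          + ∑ i ∈ Finset.Icc 1 p, (h i * ((p - i).factorial : R)) • Bdelta R f (p + 1 - i) := by
      rw [BfAux.pow_dt_Bdelta f D hD dt hdt, ← Nat.cast_smul_eq_nsmul R, hc]
      congr 1
      refine Finset.sum_congr rfl ?_
      intro i hi
      simp only [Finset.mem_Icc] at hi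
      rw [BfAux.pow_dt_Bdelta f D hD dt hdt, ← Nat.cast_smul_eq_nsmul R, smul_smul,
        show p - i + 1 = p + 1 - i by omega]
    rw [← e]; exact hmem
  -- downward step
  have down : ∀ q : ℕ, Q (q + 1) → Q q := by
    intro q hq
    obtain ⟨g, hg⟩ := hq
    refine ⟨g, ?_⟩
    set ξ := c • Bdelta R f (q + 1 + 1)
        + ∑ i ∈ Finset.Icc 1 (q + 1), g i • Bdelta R f (q + 1 + 1 - i) with hξ
    have hmemξ : f • ξ - (X : R[X]) • ξ ∈ N :=
      N.sub_mem (N.smul_mem f hg) (hN ξ hg)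
    have ecalc : f • ξ - (X : R[X]) • ξ
        = c • Bdelta R f (q + 1)
          + ∑ i ∈ Finset.Icc 1 q, g i • Bdelta R f (q + 1 - i) := by
      rw [hξ, smul_add, smul_add, Finset.smul_sum, Finset.smul_sum]
      have : (f • (c • Bdelta R f (q + 1 + 1))
            + ∑ i ∈ Finset.Icc 1 (q + 1), f • (g i • Bdelta R f (q + 1 + 1 - i)))
          - ((X : R[X]) • (c • Bdelta R f (q + 1 + 1))
            + ∑ i ∈ Finset.Icc 1 (q + 1), (X : R[X]) • (g i • Bdelta R f (q + 1 + 1 - i)))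
          = (f • (c • Bdelta R f (q + 1 + 1))
              - (X : R[X]) • (c • Bdelta R f (q + 1 + 1)))
            + ∑ i ∈ Finset.Icc 1 (q + 1),
              (f • (g i • Bdelta R f (q + 1 + 1 - i))
                - (X : R[X]) • (g i • Bdelta R f (q + 1 + 1 - i))) := by
        rw [Finset.sum_sub_distrib]; abel
      rw [this, term]
      congr 1
      have esum : ∀ i ∈ Finset.Icc 1 (q + 1),
          f • (g i • Bdelta R f (q + 1 + 1 - i))
            - (X : R[X]) • (g i • Bdelta R f (q + 1 + 1 - i))
          = g i • Bdelta R f (q + 1 - i) := by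
        intro i hi
        simp only [Finset.mem_Icc] at hi
        rw [show q + 1 + 1 - i = (q + 1 - i) + 1 by omega, term]
      rw [Finset.sum_congr rfl esum, Finset.sum_Icc_succ_top (by omega : 1 ≤ q + 1),
        show q + 1 - (q + 1) = 0 by omega, BfAux.Bdelta_zero, smul_zero, add_zero]
    rw [ecalc] at hmemξ
    exact hmemξ
  -- Q q for all q ≤ p
  have hQall : ∀ d : ℕ, Q (p - d) := by
    intro d
    induction d with
    | zero => simpa using hQp
    | succ d ih =>
      by_cases hdp : p ≤ d
      · rw [show p - (d + 1) = p - d by omega]; exact ih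
      · have e : p - d = (p - (d + 1)) + 1 := by omega
        rw [e] at ih
        exact down _ ih
  have hQle : ∀ j ≤ p, Q j := by
    intro j hj
    have := hQall (p - j)
    rwa [show p - (p - j) = j by omega] at this
  -- invertibility of c
  have hcinv : ∀ x : BQuot R f, c • x ∈ N → x ∈ N := by
    intro x hx
    have h1 : (algebraMap ℚ R (1 / (p.factorial : ℚ))) • (c • x) ∈ N := N.smul_mem _ hx
    rwa [smul_smul, hc, show (p.factorial : R) = algebraMap ℚ R (p.factorial : ℚ) by
        simp [map_natCast],
      ← map_mul, one_div, inv_mul_cancel₀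
        (by exact_mod_cast p.factorial_ne_zero : ((p.factorial : ℚ)) ≠ 0),
      map_one, one_smul] at h1
  -- upward: Bdelta (j+1) ∈ N for j ≤ p
  have up : ∀ j, j ≤ p → Bdelta R f (j + 1) ∈ N := by
    intro j
    induction j using Nat.strong_induction_on with
    | _ j ih =>
      intro hj
      obtain ⟨g, hg⟩ := hQle j hj
      have hS : ∑ i ∈ Finset.Icc 1 j, g i • Bdelta R f (j + 1 - i) ∈ N := by
        refine Submodule.sum_mem N ?_
        intro i hi
        simp only [Finset.mem_Icc] at hi
        refine N.smul_mem _ ?_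
        rw [show j + 1 - i = (j - i) + 1 by omega]
        exact ih (j - i) (by omega) (by omega)
      have : c • Bdelta R f (j + 1) ∈ N := by
        have := N.sub_mem hg hS
        simpa using this
      exact hcinv _ this
  intro j hj
  rw [BfAux.pow_dt_Bdelta f D hD dt hdt, ← Nat.cast_smul_eq_nsmul R]
  exact N.smul_mem _ (up j hj)
end

section
/- Let n ≥ 1 and 1 ≤ r ≤ n be integers and let a_1, …, a_r be positive integers. Let S = ℂ[y_1, …, y_n, z_1, …, z_r] and let I ⊆ S be the ideal generated by the elements Q_i = a_1 y_i z_i − a_i y_1 z_1 for 2 ≤ i ≤ r. Then the residue classes of the monomials y^v z^w, as (v, w) ranges over the pairs in ℤ_{≥0}^n × ℤ_{≥0}^r satisfying v_i w_i = 0 for all 2 ≤ i ≤ r, form a basis of S/I as a ℂ-vector space. (This is the monomial decomposition of 𝒪(Y)[z_1, …, z_r]/(Q_2, …, Q_r) used in the proof of Theorem 4.2 to identify the zeroth cohomology of the graded pieces Gr^F_p ‾𝒞_{D_α} with Gr^F_{p−1} V_{−α} B_g^r.) -/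
set_option synthInstance.maxHeartbeats 1000000
set_option maxHeartbeats 1000000


/-!
Let `n ≥ 1`, `1 ≤ r ≤ n`, and let `a_1, …, a_r` be positive integers
(0-indexed below: `a 0, …, a (r-1)`).  Let
`S = ℂ[y_1, …, y_n, z_1, …, z_r]` (modelled as
`MvPolynomial (Fin n ⊕ Fin r) ℂ`, with `y i = X (inl i)`, `z i = X (inr i)`,
0-indexed), and let `I ⊆ S` be the ideal generated by
`Q_i = a_1 y_i z_i − a_i y_1 z_1` for `2 ≤ i ≤ r`.

STATEMENT: the residue classes of the monomials `y^v z^w`, as `(v, w)` ranges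
over the pairs in `ℤ_{≥0}^n × ℤ_{≥0}^r` with `v_i w_i = 0` for all
`2 ≤ i ≤ r`, form a `ℂ`-vector space basis of `S/I`: the family is linearly
independent and spans.
-/

open MvPolynomial

/-- The index set: pairs `(v, w)` of exponent vectors with `v_i w_i = 0` for
`2 ≤ i ≤ r` (0-indexed: for `i : Fin r` with `0 < i`). -/
def GoodPairs (n r : ℕ) (hrn : r ≤ n) : Type :=
  {vw : (Fin n → ℕ) × (Fin r → ℕ) //
    ∀ i : Fin r, 0 < (i : ℕ) → vw.1 (Fin.castLE hrn i) * vw.2 i = 0}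

/-- The generators `Q_i = a_1 y_i z_i − a_i y_1 z_1`, `2 ≤ i ≤ r` (0-indexed:
`1 ≤ i ≤ r − 1`). -/
noncomputable def Qset (n r : ℕ) (hr1 : 1 ≤ r) (hrn : r ≤ n) (a : ℕ → ℕ) :
    Set (MvPolynomial (Fin n ⊕ Fin r) ℂ) :=
  {q | ∃ i : Fin r, 0 < (i : ℕ) ∧
    q = C (a 0 : ℂ) * X (Sum.inl (Fin.castLE hrn i)) * X (Sum.inr i)
      - C (a (i : ℕ) : ℂ) * X (Sum.inl (⟨0, by omega⟩ : Fin n))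
          * X (Sum.inr (⟨0, hr1⟩ : Fin r))}

/-- The family of residue classes of the monomials `y^v z^w` in `S/I`. -/
noncomputable def monomialClass (n r : ℕ) (hr1 : 1 ≤ r) (hrn : r ≤ n) (a : ℕ → ℕ)
    (vw : GoodPairs n r hrn) :
    MvPolynomial (Fin n ⊕ Fin r) ℂ ⧸ Ideal.span (Qset n r hr1 hrn a) :=
  Ideal.Quotient.mk _
    ((∏ i : Fin n, X (Sum.inl i) ^ vw.1.1 i) * ∏ i : Fin r, X (Sum.inr i) ^ vw.1.2 i)

namespace MB

open Sum Finsupp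

variable {n r : ℕ}

/-- min exponents to cancel -/
def mfun (hrn : r ≤ n) (u : (Fin n ⊕ Fin r) →₀ ℕ) (i : Fin r) : ℕ :=
  if (i : ℕ) = 0 then 0 else min (u (inl (Fin.castLE hrn i))) (u (inr i))

def tfun (hrn : r ≤ n) (u : (Fin n ⊕ Fin r) →₀ ℕ) : ℕ := ∑ i, mfun hrn u i

def nfPair (hrn : r ≤ n) (u : (Fin n ⊕ Fin r) →₀ ℕ) : (Fin n → ℕ) × (Fin r → ℕ) :=
  (fun j => if (j : ℕ) = 0 then u (inl j) + tfun hrn u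
    else u (inl j) - (if h : (j : ℕ) < r then mfun hrn u ⟨j, h⟩ else 0),
   fun i => if (i : ℕ) = 0 then u (inr i) + tfun hrn u else u (inr i) - mfun hrn u i)

noncomputable def toExp (p : (Fin n → ℕ) × (Fin r → ℕ)) : (Fin n ⊕ Fin r) →₀ ℕ :=
  Finsupp.equivFunOnFinite.symm (Sum.elim p.1 p.2)

@[simp] lemma toExp_inl (p : (Fin n → ℕ) × (Fin r → ℕ)) (j : Fin n) :
    toExp p (inl j) = p.1 j := rfl

@[simp] lemma toExp_inr (p : (Fin n → ℕ) × (Fin r → ℕ)) (i : Fin r) :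
    toExp p (inr i) = p.2 i := rfl

lemma nfPair_good (hrn : r ≤ n) (u : (Fin n ⊕ Fin r) →₀ ℕ) :
    ∀ i : Fin r, 0 < (i : ℕ) →
      (nfPair hrn u).1 (Fin.castLE hrn i) * (nfPair hrn u).2 i = 0 := by
  intro i hi
  have hir : ((Fin.castLE hrn i : Fin n) : ℕ) < r := i.isLt
  simp only [nfPair]
  rw [if_neg (by simpa using hi.ne'), if_neg (by simpa using hi.ne'), dif_pos hir]
  have : (⟨(Fin.castLE hrn i : Fin n), hir⟩ : Fin r) = i := by ext; simp
  rw [this]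
  have : u (inl (Fin.castLE hrn i)) - mfun hrn u i = 0 ∨ u (inr i) - mfun hrn u i = 0 := by
    unfold mfun; rw [if_neg hi.ne']; omega
  rcases this with h | h <;> simp [h]

def nfGood (hrn : r ≤ n) (u : (Fin n ⊕ Fin r) →₀ ℕ) : GoodPairs n r hrn :=
  ⟨nfPair hrn u, nfPair_good hrn u⟩

noncomputable def cfun (hrn : r ≤ n) (a : ℕ → ℕ) (u : (Fin n ⊕ Fin r) →₀ ℕ) : ℂ :=
  ∏ i : Fin r, ((a (i : ℕ) : ℂ) / (a 0 : ℂ)) ^ mfun hrn u i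

noncomputable def phi (hrn : r ≤ n) (a : ℕ → ℕ) :
    MvPolynomial (Fin n ⊕ Fin r) ℂ →ₗ[ℂ] (GoodPairs n r hrn →₀ ℂ) :=
  (MvPolynomial.basisMonomials _ ℂ).constr ℂ
    (fun u => cfun hrn a u • Finsupp.single (nfGood hrn u) (1 : ℂ))

lemma phi_monomial (hrn : r ≤ n) (a : ℕ → ℕ) (u : (Fin n ⊕ Fin r) →₀ ℕ) (d : ℂ) :
    phi hrn a (monomial u d) = (d * cfun hrn a u) • Finsupp.single (nfGood hrn u) (1 : ℂ) := by
  have h1 : (monomial u d : MvPolynomial (Fin n ⊕ Fin r) ℂ) = d • monomial u 1 := by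
    rw [smul_monomial, smul_eq_mul, mul_one]
  have h2 : phi hrn a (monomial u 1) = cfun hrn a u • Finsupp.single (nfGood hrn u) (1 : ℂ) := by
    have := (MvPolynomial.basisMonomials (Fin n ⊕ Fin r) ℂ).constr_basis ℂ
      (fun u => cfun hrn a u • Finsupp.single (nfGood hrn u) (1 : ℂ)) u
    simpa [phi, coe_basisMonomials] using this
  rw [h1, map_smul, h2, smul_smul]


section shifts

/-- shorthand for y-index 0 -/
def Y0 (n r : ℕ) (hr1 : 1 ≤ r) (hrn : r ≤ n) : Fin n := ⟨0, by omega⟩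
def Z0 (r : ℕ) (hr1 : 1 ≤ r) : Fin r := ⟨0, hr1⟩

lemma mfun_shift_i (hrn : r ≤ n) (u : (Fin n ⊕ Fin r) →₀ ℕ) (i : Fin r) (hi : 0 < (i : ℕ)) (j : Fin r) :
    mfun hrn (u + single (inl (Fin.castLE hrn i)) 1 + single (inr i) 1) j
      = mfun hrn u j + (if j = i then 1 else 0) := by
  unfold mfun
  by_cases hj : (j : ℕ) = 0
  · have hne : j ≠ i := by intro h; subst h; omega
    rw [if_pos hj, if_pos hj, if_neg hne]
  · rw [if_neg hj, if_neg hj]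
    rcases eq_or_ne j i with rfl | hne
    · simp only [Finsupp.add_apply, Finsupp.single_apply, Sum.inl.injEq, Sum.inr.injEq,
        Fin.castLE_inj]
      simp only [if_true, reduceCtorEq, if_false]
      omega
    · have h1 : (inl (Fin.castLE hrn i) : Fin n ⊕ Fin r) ≠ inl (Fin.castLE hrn j) := by
        simp only [ne_eq, Sum.inl.injEq, Fin.castLE_inj]; exact fun h => hne h.symm
      have h2 : (inr i : Fin n ⊕ Fin r) ≠ inr j := by
        simp only [ne_eq, Sum.inr.injEq]; exact fun h => hne h.symm
      simp [Finsupp.add_apply, Finsupp.single_apply, h1, h2, hne]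

lemma mfun_shift_0 (hr1 : 1 ≤ r) (hrn : r ≤ n) (u : (Fin n ⊕ Fin r) →₀ ℕ) (j : Fin r) :
    mfun hrn (u + single (inl (Y0 n r hr1 hrn)) 1 + single (inr (Z0 r hr1)) 1) j
      = mfun hrn u j := by
  unfold mfun
  by_cases hj : (j : ℕ) = 0
  · rw [if_pos hj, if_pos hj]
  · rw [if_neg hj, if_neg hj]
    have h1 : (inl (Y0 n r hr1 hrn) : Fin n ⊕ Fin r) ≠ inl (Fin.castLE hrn j) := by
      simp only [ne_eq, Sum.inl.injEq, Y0, Fin.ext_iff, Fin.coe_castLE]; omega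
    have h2 : (inr (Z0 r hr1) : Fin n ⊕ Fin r) ≠ inr j := by
      simp only [ne_eq, Sum.inr.injEq, Z0, Fin.ext_iff]; omega
    simp [Finsupp.add_apply, Finsupp.single_apply, h1, h2]

lemma tfun_shift_i (hrn : r ≤ n) (u : (Fin n ⊕ Fin r) →₀ ℕ) (i : Fin r) (hi : 0 < (i : ℕ)) :
    tfun hrn (u + single (inl (Fin.castLE hrn i)) 1 + single (inr i) 1)
      = tfun hrn u + 1 := by
  unfold tfun
  simp only [mfun_shift_i hrn u i hi]
  rw [Finset.sum_add_distrib]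
  congr 1
  simp

lemma tfun_shift_0 (hr1 : 1 ≤ r) (hrn : r ≤ n) (u : (Fin n ⊕ Fin r) →₀ ℕ) :
    tfun hrn (u + single (inl (Y0 n r hr1 hrn)) 1 + single (inr (Z0 r hr1)) 1)
      = tfun hrn u := by
  unfold tfun
  exact Finset.sum_congr rfl fun j _ => mfun_shift_0 hr1 hrn u j

lemma nfPair_shift (hr1 : 1 ≤ r) (hrn : r ≤ n) (u : (Fin n ⊕ Fin r) →₀ ℕ) (i : Fin r) (hi : 0 < (i : ℕ)) :
    nfPair hrn (u + single (inl (Fin.castLE hrn i)) 1 + single (inr i) 1)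
      = nfPair hrn (u + single (inl (Y0 n r hr1 hrn)) 1 + single (inr (Z0 r hr1)) 1) := by
  have hti := tfun_shift_i hrn u i hi
  have ht0 := tfun_shift_0 hr1 hrn u
  have hmi := mfun_shift_i hrn u i hi
  have hm0 := mfun_shift_0 hr1 hrn u
  unfold nfPair
  refine Prod.ext (funext fun j => ?_) (funext fun k => ?_) <;> dsimp only
  · by_cases hj : (j : ℕ) = 0
    · rw [if_pos hj, if_pos hj, hti, ht0]
      have h1 : (inl (Fin.castLE hrn i) : Fin n ⊕ Fin r) ≠ inl j := by
        simp only [ne_eq, Sum.inl.injEq, Fin.ext_iff, Fin.coe_castLE]; omega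
      have h2 : (inl (Y0 n r hr1 hrn) : Fin n ⊕ Fin r) = inl j := by
        simp only [Sum.inl.injEq, Y0, Fin.ext_iff]; omega
      simp only [Finsupp.add_apply, Finsupp.single_apply, h1, h2, if_true, if_false,
        reduceCtorEq, if_neg h1, if_pos h2]
      omega
    · rw [if_neg hj, if_neg hj]
      have h2 : (inl (Y0 n r hr1 hrn) : Fin n ⊕ Fin r) ≠ inl j := by
        simp only [ne_eq, Sum.inl.injEq, Y0, Fin.ext_iff]; omega
      by_cases hjr : (j : ℕ) < r
      · rw [dif_pos hjr, dif_pos hjr, hmi, hm0]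
        have hcase : ((inl (Fin.castLE hrn i) : Fin n ⊕ Fin r) = inl j
            ↔ (⟨(j : ℕ), hjr⟩ : Fin r) = i) := by
          simp [Fin.ext_iff]; omega
        by_cases hc : (⟨(j : ℕ), hjr⟩ : Fin r) = i
        · have hc' := hcase.mpr hc
          simp only [Finsupp.add_apply, Finsupp.single_apply, if_pos hc', if_pos hc,
            reduceCtorEq, if_false, if_neg h2]
          omega
        · have hc' : ¬ ((inl (Fin.castLE hrn i) : Fin n ⊕ Fin r) = inl j) :=
            fun h => hc (hcase.mp h)
          simp only [Finsupp.add_apply, Finsupp.single_apply, if_neg hc', if_neg hc,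
            reduceCtorEq, if_false, if_neg h2]
          omega
      · rw [dif_neg hjr, dif_neg hjr]
        have h1 : (inl (Fin.castLE hrn i) : Fin n ⊕ Fin r) ≠ inl j := by
          simp only [ne_eq, Sum.inl.injEq, Fin.ext_iff, Fin.coe_castLE]; omega
        simp only [Finsupp.add_apply, Finsupp.single_apply, if_neg h1, if_neg h2,
          reduceCtorEq, if_false]
  · by_cases hk : (k : ℕ) = 0
    · rw [if_pos hk, if_pos hk, hti, ht0]
      have h1 : (inr i : Fin n ⊕ Fin r) ≠ inr k := by
        simp only [ne_eq, Sum.inr.injEq, Fin.ext_iff]; omega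
      have h2 : (inr (Z0 r hr1) : Fin n ⊕ Fin r) = inr k := by
        simp only [Sum.inr.injEq, Z0, Fin.ext_iff]; omega
      simp only [Finsupp.add_apply, Finsupp.single_apply, if_neg h1, if_pos h2,
        reduceCtorEq, if_false]
      omega
    · rw [if_neg hk, if_neg hk, hmi, hm0]
      have h2 : (inr (Z0 r hr1) : Fin n ⊕ Fin r) ≠ inr k := by
        simp only [ne_eq, Sum.inr.injEq, Z0, Fin.ext_iff]; omega
      have hcase : ((inr i : Fin n ⊕ Fin r) = inr k ↔ k = i) := by
        constructor
        · intro h; exact (Sum.inr.injEq _ _ ▸ h : i = k).symm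
        · intro h; rw [h]
      by_cases hc : k = i
      · have hc' := hcase.mpr hc
        simp only [Finsupp.add_apply, Finsupp.single_apply, if_pos hc', if_pos hc,
          reduceCtorEq, if_false, if_neg h2]
        omega
      · have hc' : ¬ ((inr i : Fin n ⊕ Fin r) = inr k) := fun h => hc (hcase.mp h)
        simp only [Finsupp.add_apply, Finsupp.single_apply, if_neg hc', if_neg hc,
          reduceCtorEq, if_false, if_neg h2]
        omega

lemma cfun_shift_i (hrn : r ≤ n) (a : ℕ → ℕ) (u : (Fin n ⊕ Fin r) →₀ ℕ) (i : Fin r) (hi : 0 < (i : ℕ)) :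
    cfun hrn a (u + single (inl (Fin.castLE hrn i)) 1 + single (inr i) 1)
      = ((a (i : ℕ) : ℂ) / (a 0 : ℂ)) * cfun hrn a u := by
  unfold cfun
  simp only [mfun_shift_i hrn u i hi, pow_add]
  rw [Finset.prod_mul_distrib, mul_comm]
  congr 1
  have h1 : ∀ j : Fin r, ((a (j : ℕ) : ℂ) / (a 0 : ℂ)) ^ (if j = i then 1 else 0)
      = if j = i then ((a (j : ℕ) : ℂ) / (a 0 : ℂ)) else 1 := by
    intro j; split_ifs <;> simp
  rw [Finset.prod_congr rfl fun j _ => h1 j,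
    Finset.prod_ite_eq' Finset.univ i (fun j => ((a (j : ℕ) : ℂ) / (a 0 : ℂ)))]
  simp

lemma cfun_shift_0 (hr1 : 1 ≤ r) (hrn : r ≤ n) (a : ℕ → ℕ) (u : (Fin n ⊕ Fin r) →₀ ℕ) :
    cfun hrn a (u + single (inl (Y0 n r hr1 hrn)) 1 + single (inr (Z0 r hr1)) 1)
      = cfun hrn a u := by
  unfold cfun
  exact Finset.prod_congr rfl fun j _ => by rw [mfun_shift_0 hr1 hrn u j]

end shifts

section main

lemma prod_monomial_one {ι : Type*} (s : Finset ι) (f : ι → ((Fin n ⊕ Fin r) →₀ ℕ)) :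
    (∏ i ∈ s, (monomial (f i) (1 : ℂ) : MvPolynomial (Fin n ⊕ Fin r) ℂ))
      = monomial (∑ i ∈ s, f i) 1 := by
  classical
  induction s using Finset.cons_induction with
  | empty => simp
  | cons i s his ih =>
    rw [Finset.prod_cons, Finset.sum_cons, ih, monomial_mul, mul_one]

lemma prod_X_pow (v : Fin n → ℕ) (w : Fin r → ℕ) :
    ((∏ i : Fin n, X (inl i) ^ v i) * ∏ i : Fin r, X (inr i) ^ w i
      : MvPolynomial (Fin n ⊕ Fin r) ℂ)
      = monomial (toExp (v, w)) 1 := by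
  simp only [X_pow_eq_monomial]
  rw [prod_monomial_one, prod_monomial_one, monomial_mul, mul_one]
  have hexp : ((∑ i : Fin n, single (inl i) (v i)) + ∑ i : Fin r, single (inr i) (w i)
      : (Fin n ⊕ Fin r) →₀ ℕ) = toExp (v, w) := by
    ext s
    rw [Finsupp.add_apply, Finset.sum_apply', Finset.sum_apply']
    cases s with
    | inl j => simp [Finsupp.single_apply, Finset.sum_ite_eq]
    | inr k => simp [Finsupp.single_apply, Finset.sum_ite_eq]
  rw [hexp]

lemma monomialClass_eq (hr1 : 1 ≤ r) (hrn : r ≤ n) (a : ℕ → ℕ) (g : GoodPairs n r hrn) :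
    monomialClass n r hr1 hrn a g
      = Ideal.Quotient.mk (Ideal.span (Qset n r hr1 hrn a)) (monomial (toExp g.1) 1) := by
  unfold monomialClass
  congr 1
  have : g.1 = (g.1.1, g.1.2) := rfl
  rw [prod_X_pow g.1.1 g.1.2, ← this]

lemma monomial_mul_Q (hr1 : 1 ≤ r) (hrn : r ≤ n) (a : ℕ → ℕ)
    (u : (Fin n ⊕ Fin r) →₀ ℕ) (i : Fin r) :
    (monomial u (1 : ℂ) : MvPolynomial (Fin n ⊕ Fin r) ℂ) *
      (C (a 0 : ℂ) * X (inl (Fin.castLE hrn i)) * X (inr i)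
        - C (a (i : ℕ) : ℂ) * X (inl (Y0 n r hr1 hrn)) * X (inr (Z0 r hr1)))
    = (a 0 : ℂ) • monomial (u + single (inl (Fin.castLE hrn i)) 1 + single (inr i) 1) 1
      - (a (i : ℕ) : ℂ) •
          monomial (u + single (inl (Y0 n r hr1 hrn)) 1 + single (inr (Z0 r hr1)) 1) 1 := by
  have hX : ∀ (s : Fin n ⊕ Fin r), (X s : MvPolynomial (Fin n ⊕ Fin r) ℂ)
      = monomial (single s 1) 1 := fun s => rfl
  rw [mul_sub]
  congr 1
  · rw [hX, hX, C_apply, monomial_mul, monomial_mul, monomial_mul, smul_monomial]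
    congr 1
    · rw [zero_add, ← add_assoc]
    · rw [smul_eq_mul, mul_one, one_mul]
  · rw [hX, hX, C_apply, monomial_mul, monomial_mul, monomial_mul, smul_monomial]
    congr 1
    · rw [zero_add, ← add_assoc]
    · rw [smul_eq_mul, mul_one, one_mul]

lemma nfGood_shift (hr1 : 1 ≤ r) (hrn : r ≤ n) (u : (Fin n ⊕ Fin r) →₀ ℕ)
    (i : Fin r) (hi : 0 < (i : ℕ)) :
    nfGood hrn (u + single (inl (Fin.castLE hrn i)) 1 + single (inr i) 1)
      = nfGood hrn (u + single (inl (Y0 n r hr1 hrn)) 1 + single (inr (Z0 r hr1)) 1) :=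
  Subtype.ext (nfPair_shift hr1 hrn u i hi)

lemma phi_mul_Q (hr1 : 1 ≤ r) (hrn : r ≤ n) (a : ℕ → ℕ) (ha0 : (a 0 : ℂ) ≠ 0)
    (i : Fin r) (hi : 0 < (i : ℕ)) (p : MvPolynomial (Fin n ⊕ Fin r) ℂ) :
    phi hrn a (p * (C (a 0 : ℂ) * X (inl (Fin.castLE hrn i)) * X (inr i)
        - C (a (i : ℕ) : ℂ) * X (inl (Y0 n r hr1 hrn)) * X (inr (Z0 r hr1)))) = 0 := by
  induction p using MvPolynomial.induction_on' with
  | add p q hp hq => rw [add_mul, map_add, hp, hq, add_zero]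
  | monomial u d =>
    have hd : (monomial u d : MvPolynomial (Fin n ⊕ Fin r) ℂ) = d • monomial u 1 := by
      rw [smul_monomial, smul_eq_mul, mul_one]
    rw [hd, smul_mul_assoc, map_smul, monomial_mul_Q hr1 hrn a u i, map_sub,
      map_smul, map_smul, phi_monomial, phi_monomial,
      cfun_shift_i hrn a u i hi, cfun_shift_0 hr1 hrn a u, nfGood_shift hr1 hrn u i hi]
    rw [smul_smul, smul_smul, ← sub_smul]
    have hz : (a 0 : ℂ) * (1 * ((a (i : ℕ) : ℂ) / (a 0 : ℂ) * cfun hrn a u))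
        - (a (i : ℕ) : ℂ) * (1 * cfun hrn a u) = 0 := by
      field_simp
      ring
    rw [hz, zero_smul, smul_zero]

lemma phi_ideal (hr1 : 1 ≤ r) (hrn : r ≤ n) (a : ℕ → ℕ) (ha0 : (a 0 : ℂ) ≠ 0)
    (x : MvPolynomial (Fin n ⊕ Fin r) ℂ) (hx : x ∈ Ideal.span (Qset n r hr1 hrn a)) :
    phi hrn a x = 0 := by
  have key : ∀ q : MvPolynomial (Fin n ⊕ Fin r) ℂ, phi hrn a (q * x) = 0 := by
    refine Submodule.span_induction (p := fun x _ => ∀ q, phi hrn a (q * x) = 0)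
      ?_ ?_ ?_ ?_ hx
    · rintro y ⟨i, hi, rfl⟩ q
      exact phi_mul_Q hr1 hrn a ha0 i hi q
    · intro q; rw [mul_zero, map_zero]
    · intro y z _ _ hy hz q; rw [mul_add, map_add, hy, hz, add_zero]
    · intro s y _ hy q
      rw [smul_eq_mul, ← mul_assoc]
      exact hy (q * s)
  simpa using key 1

lemma mfun_toExp_good (hrn : r ≤ n) (g : GoodPairs n r hrn) (i : Fin r) :
    mfun hrn (toExp g.1) i = 0 := by
  unfold mfun
  by_cases hi : (i : ℕ) = 0
  · rw [if_pos hi]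
  · rw [if_neg hi]
    have := g.2 i (by omega)
    rw [toExp_inl, toExp_inr]
    rcases Nat.mul_eq_zero.mp this with h | h <;> simp [h]

lemma nfGood_toExp_good (hrn : r ≤ n) (g : GoodPairs n r hrn) :
    nfGood hrn (toExp g.1) = g := by
  have hm := mfun_toExp_good hrn g
  have ht : tfun hrn (toExp g.1) = 0 := by
    unfold tfun; exact Finset.sum_eq_zero fun i _ => hm i
  refine Subtype.ext ?_
  unfold nfGood nfPair
  refine Prod.ext (funext fun j => ?_) (funext fun k => ?_) <;> dsimp only
  · rw [toExp_inl]
    split_ifs with h1 h2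
    · rw [ht, Nat.add_zero]
    · rw [hm ⟨(j : ℕ), h2⟩, Nat.sub_zero]
    · rw [Nat.sub_zero]
  · rw [toExp_inr]
    split_ifs with h1
    · rw [ht, Nat.add_zero]
    · rw [hm k, Nat.sub_zero]

lemma cfun_toExp_good (hrn : r ≤ n) (a : ℕ → ℕ) (g : GoodPairs n r hrn) :
    cfun hrn a (toExp g.1) = 1 := by
  unfold cfun
  refine Finset.prod_eq_one fun i _ => ?_
  rw [mfun_toExp_good hrn g i, pow_zero]

lemma phi_good (hrn : r ≤ n) (a : ℕ → ℕ) (g : GoodPairs n r hrn) :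
    phi hrn a (monomial (toExp g.1) 1) = Finsupp.single g 1 := by
  rw [phi_monomial, cfun_toExp_good hrn a g, nfGood_toExp_good hrn g, one_mul, one_smul]

lemma mk_smul (hr1 : 1 ≤ r) (hrn : r ≤ n) (a : ℕ → ℕ) (c : ℂ)
    (x : MvPolynomial (Fin n ⊕ Fin r) ℂ) :
    Ideal.Quotient.mk (Ideal.span (Qset n r hr1 hrn a)) (c • x)
      = c • Ideal.Quotient.mk (Ideal.span (Qset n r hr1 hrn a)) x := by
  have h := map_smul (Ideal.Quotient.mkₐ ℂ (Ideal.span (Qset n r hr1 hrn a))) c x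
  rw [Ideal.Quotient.mkₐ_eq_mk] at h
  exact h

lemma mk_monomial_zero (hr1 : 1 ≤ r) (hrn : r ≤ n) (a : ℕ → ℕ)
    (u : (Fin n ⊕ Fin r) →₀ ℕ) (hu : tfun hrn u = 0) :
    Ideal.Quotient.mk (Ideal.span (Qset n r hr1 hrn a)) (monomial u 1)
      = cfun hrn a u •
        Ideal.Quotient.mk (Ideal.span (Qset n r hr1 hrn a))
          (monomial (toExp (nfPair hrn u)) 1) := by
  have hm : ∀ i, mfun hrn u i = 0 := by
    intro i
    have h := hu
    unfold tfun at h
    exact Finset.sum_eq_zero_iff.mp h i (Finset.mem_univ i)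
  have hc : cfun hrn a u = 1 := Finset.prod_eq_one fun i _ => by rw [hm i, pow_zero]
  have hnf : toExp (nfPair hrn u) = u := by
    ext s
    cases s with
    | inl j =>
      rw [toExp_inl]
      unfold nfPair
      dsimp only
      split_ifs with h1 h2
      · rw [hu, Nat.add_zero]
      · rw [hm ⟨(j : ℕ), h2⟩, Nat.sub_zero]
      · rw [Nat.sub_zero]
    | inr k =>
      rw [toExp_inr]
      unfold nfPair
      dsimp only
      split_ifs with h1
      · rw [hu, Nat.add_zero]
      · rw [hm k, Nat.sub_zero]
  rw [hnf, hc, one_smul]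

lemma mk_monomial (hr1 : 1 ≤ r) (hrn : r ≤ n) (a : ℕ → ℕ) (ha0 : (a 0 : ℂ) ≠ 0)
    (u : (Fin n ⊕ Fin r) →₀ ℕ) :
    Ideal.Quotient.mk (Ideal.span (Qset n r hr1 hrn a)) (monomial u 1)
      = cfun hrn a u •
        Ideal.Quotient.mk (Ideal.span (Qset n r hr1 hrn a))
          (monomial (toExp (nfPair hrn u)) 1) := by
  suffices H : ∀ N : ℕ, ∀ u : (Fin n ⊕ Fin r) →₀ ℕ, tfun hrn u ≤ N →
      Ideal.Quotient.mk (Ideal.span (Qset n r hr1 hrn a)) (monomial u 1)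
        = cfun hrn a u •
          Ideal.Quotient.mk (Ideal.span (Qset n r hr1 hrn a))
            (monomial (toExp (nfPair hrn u)) 1) by
    exact H (tfun hrn u) u le_rfl
  intro N
  induction N with
  | zero => exact fun u hu => mk_monomial_zero hr1 hrn a u (Nat.le_zero.mp hu)
  | succ N ih =>
    intro u hu
    by_cases h0 : tfun hrn u = 0
    · exact mk_monomial_zero hr1 hrn a u h0
    · have hex : ∃ i, mfun hrn u i ≠ 0 := by
        by_contra hall
        push_neg at hall
        exact h0 (Finset.sum_eq_zero fun i _ => hall i)
      obtain ⟨i, hmi⟩ := hex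
      have hi : 0 < (i : ℕ) := by
        rcases Nat.eq_zero_or_pos (i : ℕ) with h | h
        · exfalso; apply hmi; unfold mfun; rw [if_pos h]
        · exact h
      have hpos : 0 < u (inl (Fin.castLE hrn i)) ∧ 0 < u (inr i) := by
        unfold mfun at hmi
        rw [if_neg hi.ne'] at hmi
        omega
      set u' := u - single (inl (Fin.castLE hrn i)) 1 - single (inr i) 1 with hu'def
      have hrec : u' + single (inl (Fin.castLE hrn i)) 1 + single (inr i) 1 = u := by
        ext s
        simp only [hu'def, Finsupp.add_apply, Finsupp.tsub_apply, Finsupp.single_apply]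
        rcases eq_or_ne s (inl (Fin.castLE hrn i)) with rfl | hs1
        · have hne : ¬ ((inr i : Fin n ⊕ Fin r) = inl (Fin.castLE hrn i)) := by simp
          rw [if_pos rfl, if_neg hne]
          have := hpos.1
          omega
        · rcases eq_or_ne s (inr i) with rfl | hs2
          · have hne : ¬ ((inl (Fin.castLE hrn i) : Fin n ⊕ Fin r) = inr i) := by simp
            rw [if_neg hne, if_pos rfl]
            have := hpos.2
            omega
          · rw [if_neg (fun h => hs1 h.symm), if_neg (fun h => hs2 h.symm)]
            omega
      have hQmem : (C (a 0 : ℂ) * X (inl (Fin.castLE hrn i)) * X (inr i)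
            - C (a (i : ℕ) : ℂ) * X (inl (Y0 n r hr1 hrn)) * X (inr (Z0 r hr1)))
          ∈ Ideal.span (Qset n r hr1 hrn a) :=
        Ideal.subset_span ⟨i, hi, rfl⟩
      have hmem := Ideal.mul_mem_left (Ideal.span (Qset n r hr1 hrn a))
        (monomial u' (1 : ℂ)) hQmem
      have hz : Ideal.Quotient.mk (Ideal.span (Qset n r hr1 hrn a))
          (monomial u' (1 : ℂ) * (C (a 0 : ℂ) * X (inl (Fin.castLE hrn i)) * X (inr i)
            - C (a (i : ℕ) : ℂ) * X (inl (Y0 n r hr1 hrn)) * X (inr (Z0 r hr1)))) = 0 :=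
        Ideal.Quotient.eq_zero_iff_mem.mpr hmem
      rw [monomial_mul_Q hr1 hrn a u' i, hrec, map_sub, mk_smul, mk_smul, sub_eq_zero] at hz
      have hA : Ideal.Quotient.mk (Ideal.span (Qset n r hr1 hrn a)) (monomial u 1)
          = ((a (i : ℕ) : ℂ) / (a 0 : ℂ)) •
            Ideal.Quotient.mk (Ideal.span (Qset n r hr1 hrn a))
              (monomial (u' + single (inl (Y0 n r hr1 hrn)) 1
                + single (inr (Z0 r hr1)) 1) 1) := by
        have hcg := congrArg (fun x => (a 0 : ℂ)⁻¹ • x) hz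
        simpa [smul_smul, inv_mul_cancel₀ ha0, div_eq_inv_mul] using hcg
      have htrec : tfun hrn u = tfun hrn u' + 1 := by
        conv_lhs => rw [← hrec]
        exact tfun_shift_i hrn u' i hi
      have ht' : tfun hrn (u' + single (inl (Y0 n r hr1 hrn)) 1
          + single (inr (Z0 r hr1)) 1) ≤ N := by
        rw [tfun_shift_0 hr1 hrn u']
        omega
      have hih := ih _ ht'
      rw [hA, hih]
      have hc0 := cfun_shift_0 hr1 hrn a u'
      have hci : cfun hrn a u = ((a (i : ℕ) : ℂ) / (a 0 : ℂ)) * cfun hrn a u' := by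
        conv_lhs => rw [← hrec]
        exact cfun_shift_i hrn a u' i hi
      have hnf : nfPair hrn (u' + single (inl (Y0 n r hr1 hrn)) 1
          + single (inr (Z0 r hr1)) 1) = nfPair hrn u := by
        conv_rhs => rw [← hrec]
        exact (nfPair_shift hr1 hrn u' i hi).symm
      rw [hc0, hnf, smul_smul, hci]

end main

end MB

theorem monomial_basis_of_quotient
    (n r : ℕ) (hn : 1 ≤ n) (hr1 : 1 ≤ r) (hrn : r ≤ n)
    (a : ℕ → ℕ) (ha : ∀ i < r, 0 < a i) :
    LinearIndependent ℂ (monomialClass n r hr1 hrn a) ∧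
      Submodule.span ℂ (Set.range (monomialClass n r hr1 hrn a)) = ⊤ := by
  have ha0 : (a 0 : ℂ) ≠ 0 := Nat.cast_ne_zero.mpr (ha 0 hr1).ne'
  constructor
  · rw [linearIndependent_iff]
    intro l hl
    have hcomb : Finsupp.linearCombination ℂ (monomialClass n r hr1 hrn a) l
        = Ideal.Quotient.mk (Ideal.span (Qset n r hr1 hrn a))
            (l.sum fun g c => c • monomial (MB.toExp g.1) 1) := by
      rw [Finsupp.linearCombination_apply, map_finsuppSum]
      refine Finsupp.sum_congr fun g _ => ?_
      rw [MB.mk_smul hr1 hrn a, ← MB.monomialClass_eq]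
    rw [hcomb] at hl
    have hmem : (l.sum fun g c => c • monomial (MB.toExp g.1) (1 : ℂ))
        ∈ Ideal.span (Qset n r hr1 hrn a) := Ideal.Quotient.eq_zero_iff_mem.mp hl
    have hphi := MB.phi_ideal hr1 hrn a ha0 _ hmem
    rw [map_finsuppSum] at hphi
    have hsum : (l.sum fun g c => MB.phi hrn a (c • monomial (MB.toExp g.1) 1))
        = l.sum fun g c => Finsupp.single g c := by
      refine Finsupp.sum_congr fun g _ => ?_
      rw [map_smul, MB.phi_good, Finsupp.smul_single', mul_one]
    rw [hsum, Finsupp.sum_single] at hphi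
    exact hphi
  · rw [eq_top_iff]
    rintro x -
    obtain ⟨p, rfl⟩ := Ideal.Quotient.mk_surjective x
    induction p using MvPolynomial.induction_on' with
    | add p q hp hq => rw [map_add]; exact Submodule.add_mem _ hp hq
    | monomial u d =>
      have h1 : (monomial u d : MvPolynomial (Fin n ⊕ Fin r) ℂ) = d • monomial u 1 := by
        rw [smul_monomial, smul_eq_mul, mul_one]
      rw [h1, MB.mk_smul hr1 hrn a, MB.mk_monomial hr1 hrn a ha0 u]
      have h2 : Ideal.Quotient.mk (Ideal.span (Qset n r hr1 hrn a))
            (monomial (MB.toExp (MB.nfPair hrn u)) 1)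
          = monomialClass n r hr1 hrn a (MB.nfGood hrn u) := by
        rw [MB.monomialClass_eq]
        rfl
      rw [h2]
      exact Submodule.smul_mem _ _ (Submodule.smul_mem _ _
        (Submodule.subset_span ⟨MB.nfGood hrn u, rfl⟩))
end

section
/- Let R be an integral domain of characteristic zero and let f ∈ R be nonzero. Let θ be the additive endomorphism of M = R[t]_{f−t}/R[t] given by θ(u) = t·∂_t(u) (the Euler operator t∂_t). Then for every nonzero u ∈ M and every integer m ≥ 0, the elements u, θ(u), θ^2(u), …, θ^m(u) are linearly independent over R. (This is the claim, used in the proof of the paper's Theorem 4.2, that for every nonzero u ∈ B_g^r and every m the elements u, uθ, …, uθ^m are linearly independent.) -/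
/-!
Let `R` be an integral domain of characteristic zero, `f ∈ R` nonzero, and
`M = R[t]_{f−t}/R[t]` (the concrete model of `B_f`), with `δ_j` the class of
`(f − t)^{−j}`.  Let `D` be the (unique) `R`-linear derivation of `R[t]_{f−t}`
extending `d/dt` on `R[t]` (encoded by `hD`), inducing an `R`-linear
endomorphism `∂` of `M` (encoded by `h∂`).  Let `θ` be the Euler operator
`u ↦ t·∂(u)` on `M`.

STATEMENT: for every nonzero `u ∈ M` and every `m ≥ 0`, the elements
`u, θ(u), θ²(u), …, θ^m(u)` are linearly independent over `R`.
-/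

open Polynomial

set_option linter.unusedSectionVars false
section
variable {R : Type*} [CommRing R] [IsDomain R] [CharZero R] {f : R}

noncomputable def gden (f : R) (k : ℕ) : Submonoid.powers (C f - X : R[X]) := ⟨(C f - X)^k, k, rfl⟩

lemma g_ne : (C f - X : R[X]) ≠ 0 := by
  intro h
  have := congrArg (fun p => Polynomial.coeff p 1) h
  simp at this

lemma g_deg : (C f - X : R[X]).natDegree = 1 := by
  rw [show (C f - X : R[X]) = -(X - C f) by ring, natDegree_neg, natDegree_X_sub_C]

lemma alg_inj : Function.Injective (algebraMap R[X] (BLoc R f)) :=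
  IsLocalization.injective _ (powers_le_nonZeroDivisors_of_noZeroDivisors (g_ne (f := f)))

lemma mk_mul_spec (a : R[X]) (k : ℕ) :
    Localization.mk a (gden f k) * algebraMap R[X] (BLoc R f) ((C f - X)^k)
      = algebraMap R[X] (BLoc R f) a := by
  rw [Localization.mk_eq_mk']
  exact IsLocalization.mk'_spec _ a (gden f k)

lemma quot_eq_zero {x : BLoc R f} :
    (Submodule.Quotient.mk x : BQuot R f) = 0 ↔ ∃ p, algebraMap R[X] (BLoc R f) p = x := by
  rw [Submodule.Quotient.mk_eq_zero]
  exact Iff.rfl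

lemma smul_mk (p a : R[X]) (k : ℕ) :
    p • (Localization.mk a (gden f k) : BLoc R f)
      = Localization.mk (p * a) (gden f k) := by
  rw [Localization.smul_mk]; rfl

lemma delta_def : Bdelta R f 1 = Submodule.Quotient.mk (Localization.mk 1 (gden f 1)) := rfl

lemma mk_cancel (a : R[X]) (j i : ℕ) :
    Localization.mk ((C f - X)^j * a) (gden f (j + i)) = Localization.mk a (gden f i) := by
  rw [Localization.mk_eq_mk_iff, Localization.r_iff_exists]
  exact ⟨1, by simp [gden]; ring⟩

lemma Cr_smul_delta {r : R[X]} (h : r • Bdelta R f 1 = 0) (hr : r.natDegree = 0) : r = 0 := by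
  rw [delta_def, ← Submodule.Quotient.mk_smul, smul_mk, mul_one, quot_eq_zero] at h
  obtain ⟨p, hp⟩ := h
  have h2 := congrArg (· * algebraMap R[X] (BLoc R f) ((C f - X)^1)) hp
  simp only [mk_mul_spec] at h2
  rw [← map_mul] at h2
  have h3 : p * (C f - X)^1 = r := alg_inj h2
  by_contra hr0
  have hp0 : p ≠ 0 := by rintro rfl; simp at h3; exact hr0 h3.symm
  have h4 := congrArg natDegree h3
  rw [natDegree_mul hp0 (pow_ne_zero _ g_ne), hr, pow_one, g_deg] at h4
  omega

lemma g_smul_delta : (C f - X) • Bdelta R f 1 = 0 := by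
  rw [delta_def, ← Submodule.Quotient.mk_smul, smul_mk, mul_one, quot_eq_zero]
  refine ⟨1, ?_⟩
  rw [map_one]
  have h1 : ((gden f 1 : Submonoid.powers (C f - X : R[X])) : R[X]) = C f - X := pow_one _
  have := Localization.mk_self (gden f 1 : Submonoid.powers (C f - X : R[X]))
  rw [h1] at this
  exact this.symm

lemma exists_pow_smul_zero (v : BQuot R f) : ∃ k, ((C f - X)^k) • v = 0 := by
  obtain ⟨x, rfl⟩ := Submodule.Quotient.mk_surjective _ v
  induction x using Localization.induction_on with
  | H p =>
    obtain ⟨a, s⟩ := p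
    obtain ⟨k, hk⟩ := s.2
    refine ⟨k, ?_⟩
    have hs : s = gden f k := Subtype.ext hk.symm
    subst hs
    rw [← Submodule.Quotient.mk_smul, smul_mk, quot_eq_zero]
    refine ⟨a, ?_⟩
    have := congrArg (algebraMap R[X] (BLoc R f) a * ·) (mk_cancel (f := f) 1 k 0)
    simp only [mul_one] at this
    calc algebraMap R[X] (BLoc R f) a
        = algebraMap R[X] (BLoc R f) a * Localization.mk ((C f - X)^k) (gden f k) := by
          have h1 : ((gden f k : Submonoid.powers (C f - X : R[X])) : R[X]) = (C f - X)^k := rfl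
          have h2 := Localization.mk_self (gden f k : Submonoid.powers (C f - X : R[X]))
          rw [h1] at h2
          rw [h2, mul_one]
      _ = Localization.mk ((C f - X)^k * a) (gden f k) := by
          rw [← Algebra.smul_def, smul_mk]
          congr 1
          ring

lemma ker_g {v : BQuot R f} (h : (C f - X) • v = 0) :
    ∃ r : R, v = C r • Bdelta R f 1 := by
  obtain ⟨x, rfl⟩ := Submodule.Quotient.mk_surjective _ v
  induction x using Localization.induction_on with
  | H p =>
    obtain ⟨a, s⟩ := p
    obtain ⟨k, hk⟩ := s.2
    have hs : s = gden f k := Subtype.ext hk.symm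
    subst hs
    rw [← Submodule.Quotient.mk_smul, smul_mk, quot_eq_zero] at h
    obtain ⟨p, hp⟩ := h
    have h2 := congrArg (· * algebraMap R[X] (BLoc R f) ((C f - X)^k)) hp
    simp only [mk_mul_spec] at h2
    rw [← map_mul] at h2
    have h3 : p * (C f - X)^k = (C f - X) * a := alg_inj h2
    rcases Nat.eq_zero_or_pos k with hk0 | hk1
    · subst hk0
      refine ⟨0, ?_⟩
      rw [map_zero, zero_smul, quot_eq_zero]
      refine ⟨a, ?_⟩
      have : (gden f 0) = (1 : Submonoid.powers (C f - X : R[X])) := Subtype.ext (pow_zero _)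
      rw [this, ← Localization.mk_one_eq_algebraMap, Localization.mk_eq_mk_iff,
        Localization.r_iff_exists]
      exact ⟨1, by simp⟩
    · -- a = p * g^(k-1)
      have hcancel : a = p * (C f - X)^(k-1) := by
        have : (C f - X) * a = (C f - X) * (p * (C f - X)^(k-1)) := by
          rw [← h3]
          have : (C f - X)^k = (C f - X) * (C f - X)^(k-1) := by
            conv_lhs => rw [show k = 1 + (k-1) by omega, pow_add, pow_one]
          rw [this]; ring
        exact (mul_left_cancel₀ g_ne this)
      -- p = g * q + C (p.eval f)
      obtain ⟨q0, hq0⟩ := (dvd_iff_isRoot.mpr (by simp [IsRoot])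
        : (X - C f) ∣ (p - C (p.eval f)))
      have hpdecomp : p = (C f - X) * (-q0) + C (p.eval f) := by
        linear_combination hq0
      refine ⟨p.eval f, ?_⟩
      have hkk : (C f - X)^k = (C f - X) * (C f - X)^(k-1) := by
        conv_lhs => rw [show k = 1 + (k-1) by omega, pow_add, pow_one]
      have e1 : a = (C f - X)^k * (-q0) + (C f - X)^(k-1) * C (p.eval f) := by
        rw [hcancel]
        conv_lhs => rw [hpdecomp]
        rw [hkk]; ring
      have key : (Localization.mk a (gden f k) : BLoc R f)
          = algebraMap R[X] (BLoc R f) (-q0)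
            + C (p.eval f) • Localization.mk 1 (gden f 1) := by
        rw [smul_mk, mul_one, e1, ← Localization.add_mk_self]
        congr 1
        · have h1 := mk_cancel (f := f) (-q0) k 0
          have h0 : gden f 0 = (1 : Submonoid.powers (C f - X : R[X])) :=
            Subtype.ext (pow_zero _)
          rw [show gden f k = gden f (k + 0) from rfl, h1, h0,
            ← Localization.mk_one_eq_algebraMap]
        · have h1 := mk_cancel (f := f) (C (p.eval f)) (k-1) 1
          rw [show (k-1) + 1 = k by omega] at h1
          exact h1
      rw [key, Submodule.Quotient.mk_add, Submodule.Quotient.mk_smul]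
      have hz : (Submodule.Quotient.mk (algebraMap R[X] (BLoc R f) (-q0)) : BQuot R f) = 0 :=
        quot_eq_zero.mpr ⟨-q0, rfl⟩
      rw [hz, zero_add, delta_def]

lemma step_lemma (D : Derivation R (BLoc R f) (BLoc R f))
    (hD : ∀ p : R[X], D (algebraMap R[X] (BLoc R f) p)
        = algebraMap R[X] (BLoc R f) (derivative p))
    (dt : BQuot R f →ₗ[R] BQuot R f)
    (hdt : ∀ x : BLoc R f,
      dt (Submodule.Quotient.mk x) = Submodule.Quotient.mk (D x))
    {v : BQuot R f} {n : ℕ} (hn : 1 ≤ n) {c : R}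
    (h0 : (C f - X)^n • v = 0)
    (h1 : (C f - X)^(n-1) • v = C c • Bdelta R f 1) :
    (C f - X)^n • ((X : R[X]) • dt v) = C ((n : R) * f * c) • Bdelta R f 1
    ∧ (C f - X)^(n+1) • ((X : R[X]) • dt v) = 0 := by
  set A := algebraMap R[X] (BLoc R f) with hA
  obtain ⟨V, rfl⟩ := Submodule.Quotient.mk_surjective _ v
  rw [← Submodule.Quotient.mk_smul, quot_eq_zero] at h0
  obtain ⟨P, hP⟩ := h0
  have hDg : D (A ((C f - X)^n)) = A (-((n : R[X]) * (C f - X)^(n-1))) := by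
    rw [hD]
    congr 1
    rw [derivative_pow]
    simp only [derivative_sub, derivative_C, derivative_X, zero_sub, map_natCast]
    ring
  have eq1 : A ((C f - X)^n) * D V
      = A (derivative P) + A ((n : R[X])) * A ((C f - X)^(n-1)) * V := by
    have h := congrArg D hP
    rw [hD, Algebra.smul_def, Derivation.leibniz, hDg, smul_eq_mul, smul_eq_mul] at h
    rw [map_neg, map_mul] at h
    linear_combination -h
  have hθ : (X : R[X]) • dt (Submodule.Quotient.mk V : BQuot R f)
      = Submodule.Quotient.mk ((X : R[X]) • D V) := by
    rw [hdt, Submodule.Quotient.mk_smul]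
  have eq2 : (C f - X)^n • ((X:R[X]) • D V)
      = A (X * derivative P) + ((n:R[X]) * X) • ((C f - X)^(n-1) • V) := by
    simp only [smul_smul, Algebra.smul_def, map_mul, ← hA]
    linear_combination (A X) * eq1
  have eq3 : (C f - X)^n • ((X:R[X]) • dt (Submodule.Quotient.mk V : BQuot R f))
      = ((n:R[X]) * X) • (C c • Bdelta R f 1) := by
    rw [hθ, ← Submodule.Quotient.mk_smul, eq2, Submodule.Quotient.mk_add,
      Submodule.Quotient.mk_smul, Submodule.Quotient.mk_smul, h1]
    have hz : (Submodule.Quotient.mk (A (X * derivative P)) : BQuot R f) = 0 :=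
      quot_eq_zero.mpr ⟨X * derivative P, rfl⟩
    rw [hz, zero_add]
  have eq4 : ((n:R[X]) * X) • (C c • Bdelta R f 1) = C ((n : R) * f * c) • Bdelta R f 1 := by
    rw [smul_smul]
    have hX : ((n:R[X]) * X) * C c = C ((n:R) * f * c) - ((n:R[X]) * C c) * (C f - X) := by
      rw [map_mul, map_mul, map_natCast]
      ring
    rw [hX, sub_smul, mul_smul, g_smul_delta, smul_zero, sub_zero]
  constructor
  · rw [eq3, eq4]
  · rw [pow_succ', mul_smul, eq3, eq4, smul_comm, g_smul_delta, smul_zero]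

lemma iter_lemma (hf : f ≠ 0) (D : Derivation R (BLoc R f) (BLoc R f))
    (hD : ∀ p : R[X], D (algebraMap R[X] (BLoc R f) p)
        = algebraMap R[X] (BLoc R f) (derivative p))
    (dt : BQuot R f →ₗ[R] BQuot R f)
    (hdt : ∀ x : BLoc R f,
      dt (Submodule.Quotient.mk x) = Submodule.Quotient.mk (D x)) :
    ∀ (j : ℕ) {v : BQuot R f} {n : ℕ}, 1 ≤ n → ∀ {c : R}, c ≠ 0 →
      (C f - X)^n • v = 0 → (C f - X)^(n-1) • v = C c • Bdelta R f 1 →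
    ∃ c' : R, c' ≠ 0 ∧
      (C f - X)^(n+j) • ((fun w : BQuot R f => (X:R[X]) • dt w)^[j] v) = 0 ∧
      (C f - X)^(n+j-1) • ((fun w : BQuot R f => (X:R[X]) • dt w)^[j] v)
        = C c' • Bdelta R f 1 := by
  intro j
  induction j with
  | zero =>
    intro v n hn c hc h0 h1
    exact ⟨c, hc, by simpa using h0, by simpa using h1⟩
  | succ j ih =>
    intro v n hn c hc h0 h1
    obtain ⟨c', hc', h0', h1'⟩ := ih hn hc h0 h1
    have hnj : 1 ≤ n + j := by omega
    have hstep := step_lemma D hD dt hdt hnj h0' h1'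
    obtain ⟨hs1, hs2⟩ := hstep
    refine ⟨((n+j : ℕ) : R) * f * c', ?_, ?_, ?_⟩
    · have hnz : ((n+j:ℕ):R) ≠ 0 := Nat.cast_ne_zero.mpr (by omega)
      exact mul_ne_zero (mul_ne_zero hnz hf) hc'
    · rw [Function.iterate_succ_apply']
      rw [show n + (j+1) = (n+j) + 1 by omega]
      exact hs2
    · rw [Function.iterate_succ_apply']
      rw [show n + (j+1) - 1 = n + j by omega]
      exact hs1

end

theorem linearIndependent_iterate_euler
    {R : Type*} [CommRing R] [IsDomain R] [CharZero R] (f : R) (hf : f ≠ 0)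
    (D : Derivation R (BLoc R f) (BLoc R f))
    (hD : ∀ p : R[X], D (algebraMap R[X] (BLoc R f) p)
        = algebraMap R[X] (BLoc R f) (derivative p))
    (dt : BQuot R f →ₗ[R] BQuot R f)
    (hdt : ∀ x : BLoc R f,
      dt (Submodule.Quotient.mk x) = Submodule.Quotient.mk (D x))
    (u : BQuot R f) (hu : u ≠ 0) (m : ℕ) :
    LinearIndependent R (fun i : Fin (m + 1) =>
      (fun v : BQuot R f => (X : R[X]) • dt v)^[(i : ℕ)] u) := by
  
  classical
  have hex := exists_pow_smul_zero (f := f) u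
  set n := Nat.find hex with hn
  have hn0 : (C f - X)^n • u = 0 := Nat.find_spec hex
  have hn1 : 1 ≤ n := by
    rcases Nat.eq_zero_or_pos n with h | h
    · exfalso
      apply hu
      rw [h, pow_zero, one_smul] at hn0
      exact hn0
    · exact h
  have hmin : (C f - X)^(n-1) • u ≠ 0 := Nat.find_min hex (by omega)
  have hker : (C f - X) • ((C f - X)^(n-1) • u) = 0 := by
    rw [smul_smul, ← pow_succ', show n - 1 + 1 = n by omega]
    exact hn0
  obtain ⟨c, hcδ⟩ := ker_g hker
  have hc : c ≠ 0 := by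
    rintro rfl
    rw [map_zero, zero_smul] at hcδ
    exact hmin hcδ
  rw [Fintype.linearIndependent_iff]
  intro a ha
  by_contra hne
  push_neg at hne
  obtain ⟨i0, hi0⟩ := hne
  set S : Finset (Fin (m+1)) := Finset.univ.filter (fun i => a i ≠ 0) with hS
  have hSne : S.Nonempty := ⟨i0, by simp [hS, hi0]⟩
  set k := S.max' hSne with hk
  have hak : a k ≠ 0 := by
    have hmem : k ∈ S := S.max'_mem hSne
    exact (Finset.mem_filter.mp hmem).2
  have hgt : ∀ i : Fin (m+1), k < i → a i = 0 := by
    intro i hi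
    by_contra h
    exact absurd (S.le_max' i (by simp [hS, h])) (not_le.mpr hi)
  -- data for each iterate
  have hiter := fun j => iter_lemma hf D hD dt hdt j hn1 hc hn0 hcδ
  obtain ⟨ck, hck, hk0, hk1⟩ := hiter (k : ℕ)
  have key := congrArg (fun z => (C f - X)^(n + (k:ℕ) - 1) • z) ha
  simp only [smul_zero, Finset.smul_sum] at key
  rw [Finset.sum_eq_single k] at key
  · -- key : g^(n+k-1) • (a k • w k) = 0
    rw [← algebraMap_smul R[X] (a k), smul_smul,
      mul_comm ((C f - X)^(n + (k:ℕ) - 1)) (algebraMap R R[X] (a k)), ← smul_smul,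
      hk1, smul_smul, Polynomial.algebraMap_eq, ← map_mul] at key
    have hzz := Cr_smul_delta key (natDegree_C _)
    rw [Polynomial.C_eq_zero] at hzz
    rcases mul_eq_zero.mp hzz with h | h
    · exact hak h
    · exact hck h
  · intro i _ hik
    rcases lt_or_gt_of_ne hik with hlt | hgt'
    · obtain ⟨ci, hci, hi0', hi1'⟩ := hiter (i : ℕ)
      rw [← algebraMap_smul R[X] (a i), smul_smul,
        mul_comm ((C f - X)^(n + (k:ℕ) - 1)) (algebraMap R R[X] (a i)), ← smul_smul]
      have hsplit : (C f - X)^(n + (k:ℕ) - 1)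
          = (C f - X)^((k:ℕ) - 1 - (i:ℕ)) * (C f - X)^(n + (i:ℕ)) := by
        rw [← pow_add]
        congr 1
        have : (i:ℕ) < (k:ℕ) := hlt
        omega
      rw [hsplit, mul_smul, hi0', smul_zero, smul_zero]
    · rw [hgt i hgt', zero_smul, smul_zero]
  · intro h
    exact absurd (Finset.mem_univ k) h
end
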